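/- For κ = 8, with ⟨x⟩ = sin(πx/8)/sin(π/8) for real x, define for nonnegative integers λ1, λ2 the quantity qdimG2(λ1,λ2) = ⟨λ1+1⟩·⟨λ2/3+1/3⟩·⟨λ1+λ2/3+4/3⟩·⟨λ1+2λ2/3+5/3⟩·⟨λ1+λ2+2⟩·⟨2λ1+λ2+3⟩ / (⟨1/3⟩·⟨1⟩·⟨4/3⟩·⟨5/3⟩·⟨2⟩·⟨3⟩). Then the sum of qdimG2(λ1,λ2)² over all pairs of nonnegative integers (λ1,λ2) with 2λ1+λ2 ≤ 4 equals 48(5+2√6). -/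
import Mathlib


/-- The q-number at altitude `κ`: `⟨x⟩ = sin(πx/κ)/sin(π/κ)`. -/
noncomputable def qnum (κ x : ℝ) : ℝ := Real.sin (Real.pi * x / κ) / Real.sin (Real.pi / κ)

/-- The quantum Weyl dimension of the irreducible G2 representation of highest weight
`{λ1,λ2}` at altitude κ = 8 (level k = 4). -/
noncomputable def qdimG2 (lam1 lam2 : ℕ) : ℝ :=
    qnum 8 (lam1 + 1) * qnum 8 (lam2 / 3 + 1/3) * qnum 8 (lam1 + lam2 / 3 + 4/3) *
      qnum 8 (lam1 + 2 * lam2 / 3 + 5/3) * qnum 8 (lam1 + lam2 + 2) *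
      qnum 8 (2 * lam1 + lam2 + 3) /
    (qnum 8 (1/3) * qnum 8 1 * qnum 8 (4/3) * qnum 8 (5/3) * qnum 8 2 * qnum 8 3)

private lemma h2' : Real.sqrt 2 ^ 2 = 2 := Real.sq_sqrt (by norm_num)
private lemma h3' : Real.sqrt 3 ^ 2 = 3 := Real.sq_sqrt (by norm_num)
private lemma h6' : Real.sqrt 6 = Real.sqrt 2 * Real.sqrt 3 := by
  rw [show (6:ℝ) = 2*3 by norm_num, Real.sqrt_mul (by norm_num : (0:ℝ) ≤ 2)]
private lemma u2 : Real.sqrt 2 < 1.414214 := by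
  nlinarith [h2', Real.sqrt_nonneg 2]
private lemma l2 : 1.414213 < Real.sqrt 2 := by
  nlinarith [h2', Real.sqrt_nonneg 2]
private lemma u3 : Real.sqrt 3 < 1.7320509 := by
  nlinarith [h3', Real.sqrt_nonneg 3]
private lemma l3 : 1.7320508 < Real.sqrt 3 := by
  nlinarith [h3', Real.sqrt_nonneg 3]
private lemma l6 : 2.449489 < Real.sqrt 6 := by
  nlinarith [Real.sq_sqrt (by norm_num : (0:ℝ) ≤ 6), Real.sqrt_nonneg 6]
private lemma u6 : Real.sqrt 6 < 2.449490 := by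
  nlinarith [Real.sq_sqrt (by norm_num : (0:ℝ) ≤ 6), Real.sqrt_nonneg 6]

private lemma myc1 : Real.cos (Real.pi/12) = (Real.sqrt 6 + Real.sqrt 2)/4 := by
  rw [show Real.pi/12 = Real.pi/3 - Real.pi/4 by ring, Real.cos_sub, Real.cos_pi_div_three,
    Real.sin_pi_div_three, Real.cos_pi_div_four, Real.sin_pi_div_four, h6']
  ring
private lemma myc5 : Real.cos (5*Real.pi/12) = (Real.sqrt 6 - Real.sqrt 2)/4 := by
  rw [show 5*Real.pi/12 = Real.pi/4 + Real.pi/6 by ring, Real.cos_add, Real.cos_pi_div_four,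
    Real.cos_pi_div_six, Real.sin_pi_div_four, Real.sin_pi_div_six, h6']
  ring
private lemma myc7 : Real.cos (7*Real.pi/12) = (Real.sqrt 2 - Real.sqrt 6)/4 := by
  rw [show 7*Real.pi/12 = Real.pi - 5*Real.pi/12 by ring, Real.cos_pi_sub, myc5]
  ring
private lemma myc8 : Real.cos (2*Real.pi/3) = -(1/2) := by
  rw [show 2*Real.pi/3 = Real.pi - Real.pi/3 by ring, Real.cos_pi_sub, Real.cos_pi_div_three]
private lemma myc9 : Real.cos (3*Real.pi/4) = -(Real.sqrt 2/2) := by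
  rw [show 3*Real.pi/4 = Real.pi - Real.pi/4 by ring, Real.cos_pi_sub, Real.cos_pi_div_four]
private lemma myc10 : Real.cos (5*Real.pi/6) = -(Real.sqrt 3/2) := by
  rw [show 5*Real.pi/6 = Real.pi - Real.pi/6 by ring, Real.cos_pi_sub, Real.cos_pi_div_six]
private lemma myc11 : Real.cos (11*Real.pi/12) = -((Real.sqrt 6 + Real.sqrt 2)/4) := by
  rw [show 11*Real.pi/12 = Real.pi - Real.pi/12 by ring, Real.cos_pi_sub, myc1]
private lemma myc13 : Real.cos (13*Real.pi/12) = -((Real.sqrt 6 + Real.sqrt 2)/4) := by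
  rw [show 13*Real.pi/12 = Real.pi + Real.pi/12 by ring, Real.cos_add, Real.cos_pi, Real.sin_pi, myc1]
  ring
private lemma myc15 : Real.cos (5*Real.pi/4) = -(Real.sqrt 2/2) := by
  rw [show 5*Real.pi/4 = Real.pi + Real.pi/4 by ring, Real.cos_add, Real.cos_pi, Real.sin_pi,
    Real.cos_pi_div_four]
  ring
private lemma myc18 : Real.cos (3*Real.pi/2) = 0 := by
  rw [show 3*Real.pi/2 = Real.pi + Real.pi/2 by ring, Real.cos_add, Real.cos_pi, Real.sin_pi,
    Real.cos_pi_div_two]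
  ring
private lemma myc21 : Real.cos (7*Real.pi/4) = Real.sqrt 2/2 := by
  rw [show 7*Real.pi/4 = Real.pi + 3*Real.pi/4 by ring, Real.cos_add, Real.cos_pi, Real.sin_pi, myc9]
  ring

private lemma Q1 : qnum 8 (1/3) ^ 2 = ((3/2) + (1/2)*Real.sqrt 2 + (-1/2)*Real.sqrt 3 + (-1/2)*Real.sqrt 6) := by
  rw [qnum, div_pow, Real.sin_sq_eq_half_sub, Real.sin_sq_eq_half_sub,
    show 2 * (Real.pi * (1/3) / 8) = Real.pi/12 by ring,
    show 2 * (Real.pi / 8) = Real.pi/4 by ring,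
    myc1, Real.cos_pi_div_four,
    div_eq_iff (by intro h; nlinarith [u2] : (1/2 - Real.sqrt 2/2/2 : ℝ) ≠ 0), h6']
  linear_combination ((1/8) + (-1/8) * Real.sqrt 3 : ℝ) * h2' + (0:ℝ) * h3'

private lemma Q2 : qnum 8 (2/3) ^ 2 = ((2) + (1)*Real.sqrt 2 + (-1)*Real.sqrt 3 + (-1/2)*Real.sqrt 6) := by
  rw [qnum, div_pow, Real.sin_sq_eq_half_sub, Real.sin_sq_eq_half_sub,
    show 2 * (Real.pi * (2/3) / 8) = Real.pi/6 by ring,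
    show 2 * (Real.pi / 8) = Real.pi/4 by ring,
    Real.cos_pi_div_six, Real.cos_pi_div_four,
    div_eq_iff (by intro h; nlinarith [u2] : (1/2 - Real.sqrt 2/2/2 : ℝ) ≠ 0), h6']
  linear_combination ((1/4) + (-1/8) * Real.sqrt 3 : ℝ) * h2' + (0:ℝ) * h3'

private lemma Q3 : qnum 8 (1) ^ 2 = ((1) + (0)*Real.sqrt 2 + (0)*Real.sqrt 3 + (0)*Real.sqrt 6) := by
  rw [qnum, div_pow, Real.sin_sq_eq_half_sub, Real.sin_sq_eq_half_sub,
    show 2 * (Real.pi * (1) / 8) = Real.pi/4 by ring,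
    show 2 * (Real.pi / 8) = Real.pi/4 by ring,
    Real.cos_pi_div_four,
    div_eq_iff (by intro h; nlinarith [u2] : (1/2 - Real.sqrt 2/2/2 : ℝ) ≠ 0), h6']
  linear_combination (0:ℝ) * h2' + (0:ℝ) * h3'

private lemma Q4 : qnum 8 (4/3) ^ 2 = ((1) + (1/2)*Real.sqrt 2 + (0)*Real.sqrt 3 + (0)*Real.sqrt 6) := by
  rw [qnum, div_pow, Real.sin_sq_eq_half_sub, Real.sin_sq_eq_half_sub,
    show 2 * (Real.pi * (4/3) / 8) = Real.pi/3 by ring,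
    show 2 * (Real.pi / 8) = Real.pi/4 by ring,
    Real.cos_pi_div_three, Real.cos_pi_div_four,
    div_eq_iff (by intro h; nlinarith [u2] : (1/2 - Real.sqrt 2/2/2 : ℝ) ≠ 0), h6']
  linear_combination ((1/8) : ℝ) * h2' + (0:ℝ) * h3'

private lemma Q5 : qnum 8 (5/3) ^ 2 = ((5/2) + (3/2)*Real.sqrt 2 + (-1/2)*Real.sqrt 3 + (-1/2)*Real.sqrt 6) := by
  rw [qnum, div_pow, Real.sin_sq_eq_half_sub, Real.sin_sq_eq_half_sub,
    show 2 * (Real.pi * (5/3) / 8) = 5*Real.pi/12 by ring,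
    show 2 * (Real.pi / 8) = Real.pi/4 by ring,
    myc5, Real.cos_pi_div_four,
    div_eq_iff (by intro h; nlinarith [u2] : (1/2 - Real.sqrt 2/2/2 : ℝ) ≠ 0), h6']
  linear_combination ((3/8) + (-1/8) * Real.sqrt 3 : ℝ) * h2' + (0:ℝ) * h3'

private lemma Q6 : qnum 8 (2) ^ 2 = ((2) + (1)*Real.sqrt 2 + (0)*Real.sqrt 3 + (0)*Real.sqrt 6) := by
  rw [qnum, div_pow, Real.sin_sq_eq_half_sub, Real.sin_sq_eq_half_sub,
    show 2 * (Real.pi * (2) / 8) = Real.pi/2 by ring,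
    show 2 * (Real.pi / 8) = Real.pi/4 by ring,
    Real.cos_pi_div_two, Real.cos_pi_div_four,
    div_eq_iff (by intro h; nlinarith [u2] : (1/2 - Real.sqrt 2/2/2 : ℝ) ≠ 0), h6']
  linear_combination ((1/4) : ℝ) * h2' + (0:ℝ) * h3'

private lemma Q7 : qnum 8 (7/3) ^ 2 = ((3/2) + (1/2)*Real.sqrt 2 + (1/2)*Real.sqrt 3 + (1/2)*Real.sqrt 6) := by
  rw [qnum, div_pow, Real.sin_sq_eq_half_sub, Real.sin_sq_eq_half_sub,
    show 2 * (Real.pi * (7/3) / 8) = 7*Real.pi/12 by ring,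
    show 2 * (Real.pi / 8) = Real.pi/4 by ring,
    myc7, Real.cos_pi_div_four,
    div_eq_iff (by intro h; nlinarith [u2] : (1/2 - Real.sqrt 2/2/2 : ℝ) ≠ 0), h6']
  linear_combination ((1/8) + (1/8) * Real.sqrt 3 : ℝ) * h2' + (0:ℝ) * h3'

private lemma Q8 : qnum 8 (8/3) ^ 2 = ((3) + (3/2)*Real.sqrt 2 + (0)*Real.sqrt 3 + (0)*Real.sqrt 6) := by
  rw [qnum, div_pow, Real.sin_sq_eq_half_sub, Real.sin_sq_eq_half_sub,
    show 2 * (Real.pi * (8/3) / 8) = 2*Real.pi/3 by ring,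
    show 2 * (Real.pi / 8) = Real.pi/4 by ring,
    myc8, Real.cos_pi_div_four,
    div_eq_iff (by intro h; nlinarith [u2] : (1/2 - Real.sqrt 2/2/2 : ℝ) ≠ 0), h6']
  linear_combination ((3/8) : ℝ) * h2' + (0:ℝ) * h3'

private lemma Q9 : qnum 8 (3) ^ 2 = ((3) + (2)*Real.sqrt 2 + (0)*Real.sqrt 3 + (0)*Real.sqrt 6) := by
  rw [qnum, div_pow, Real.sin_sq_eq_half_sub, Real.sin_sq_eq_half_sub,
    show 2 * (Real.pi * (3) / 8) = 3*Real.pi/4 by ring,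
    show 2 * (Real.pi / 8) = Real.pi/4 by ring,
    myc9, Real.cos_pi_div_four,
    div_eq_iff (by intro h; nlinarith [u2] : (1/2 - Real.sqrt 2/2/2 : ℝ) ≠ 0), h6']
  linear_combination ((1/2) : ℝ) * h2' + (0:ℝ) * h3'

private lemma Q10 : qnum 8 (10/3) ^ 2 = ((2) + (1)*Real.sqrt 2 + (1)*Real.sqrt 3 + (1/2)*Real.sqrt 6) := by
  rw [qnum, div_pow, Real.sin_sq_eq_half_sub, Real.sin_sq_eq_half_sub,
    show 2 * (Real.pi * (10/3) / 8) = 5*Real.pi/6 by ring,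
    show 2 * (Real.pi / 8) = Real.pi/4 by ring,
    myc10, Real.cos_pi_div_four,
    div_eq_iff (by intro h; nlinarith [u2] : (1/2 - Real.sqrt 2/2/2 : ℝ) ≠ 0), h6']
  linear_combination ((1/4) + (1/8) * Real.sqrt 3 : ℝ) * h2' + (0:ℝ) * h3'

private lemma Q11 : qnum 8 (11/3) ^ 2 = ((5/2) + (3/2)*Real.sqrt 2 + (1/2)*Real.sqrt 3 + (1/2)*Real.sqrt 6) := by
  rw [qnum, div_pow, Real.sin_sq_eq_half_sub, Real.sin_sq_eq_half_sub,
    show 2 * (Real.pi * (11/3) / 8) = 11*Real.pi/12 by ring,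
    show 2 * (Real.pi / 8) = Real.pi/4 by ring,
    myc11, Real.cos_pi_div_four,
    div_eq_iff (by intro h; nlinarith [u2] : (1/2 - Real.sqrt 2/2/2 : ℝ) ≠ 0), h6']
  linear_combination ((3/8) + (1/8) * Real.sqrt 3 : ℝ) * h2' + (0:ℝ) * h3'

private lemma Q12 : qnum 8 (4) ^ 2 = ((4) + (2)*Real.sqrt 2 + (0)*Real.sqrt 3 + (0)*Real.sqrt 6) := by
  rw [qnum, div_pow, Real.sin_sq_eq_half_sub, Real.sin_sq_eq_half_sub,
    show 2 * (Real.pi * (4) / 8) = Real.pi by ring,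
    show 2 * (Real.pi / 8) = Real.pi/4 by ring,
    Real.cos_pi, Real.cos_pi_div_four,
    div_eq_iff (by intro h; nlinarith [u2] : (1/2 - Real.sqrt 2/2/2 : ℝ) ≠ 0), h6']
  linear_combination ((1/2) : ℝ) * h2' + (0:ℝ) * h3'

private lemma Q13 : qnum 8 (13/3) ^ 2 = ((5/2) + (3/2)*Real.sqrt 2 + (1/2)*Real.sqrt 3 + (1/2)*Real.sqrt 6) := by
  rw [qnum, div_pow, Real.sin_sq_eq_half_sub, Real.sin_sq_eq_half_sub,
    show 2 * (Real.pi * (13/3) / 8) = 13*Real.pi/12 by ring,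
    show 2 * (Real.pi / 8) = Real.pi/4 by ring,
    myc13, Real.cos_pi_div_four,
    div_eq_iff (by intro h; nlinarith [u2] : (1/2 - Real.sqrt 2/2/2 : ℝ) ≠ 0), h6']
  linear_combination ((3/8) + (1/8) * Real.sqrt 3 : ℝ) * h2' + (0:ℝ) * h3'

private lemma Q15 : qnum 8 (5) ^ 2 = ((3) + (2)*Real.sqrt 2 + (0)*Real.sqrt 3 + (0)*Real.sqrt 6) := by
  rw [qnum, div_pow, Real.sin_sq_eq_half_sub, Real.sin_sq_eq_half_sub,
    show 2 * (Real.pi * (5) / 8) = 5*Real.pi/4 by ring,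
    show 2 * (Real.pi / 8) = Real.pi/4 by ring,
    myc15, Real.cos_pi_div_four,
    div_eq_iff (by intro h; nlinarith [u2] : (1/2 - Real.sqrt 2/2/2 : ℝ) ≠ 0), h6']
  linear_combination ((1/2) : ℝ) * h2' + (0:ℝ) * h3'

private lemma Q18 : qnum 8 (6) ^ 2 = ((2) + (1)*Real.sqrt 2 + (0)*Real.sqrt 3 + (0)*Real.sqrt 6) := by
  rw [qnum, div_pow, Real.sin_sq_eq_half_sub, Real.sin_sq_eq_half_sub,
    show 2 * (Real.pi * (6) / 8) = 3*Real.pi/2 by ring,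
    show 2 * (Real.pi / 8) = Real.pi/4 by ring,
    myc18, Real.cos_pi_div_four,
    div_eq_iff (by intro h; nlinarith [u2] : (1/2 - Real.sqrt 2/2/2 : ℝ) ≠ 0), h6']
  linear_combination ((1/4) : ℝ) * h2' + (0:ℝ) * h3'

private lemma Q21 : qnum 8 (7) ^ 2 = ((1) + (0)*Real.sqrt 2 + (0)*Real.sqrt 3 + (0)*Real.sqrt 6) := by
  rw [qnum, div_pow, Real.sin_sq_eq_half_sub, Real.sin_sq_eq_half_sub,
    show 2 * (Real.pi * (7) / 8) = 7*Real.pi/4 by ring,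
    show 2 * (Real.pi / 8) = Real.pi/4 by ring,
    myc21, Real.cos_pi_div_four,
    div_eq_iff (by intro h; nlinarith [u2] : (1/2 - Real.sqrt 2/2/2 : ℝ) ≠ 0), h6']
  linear_combination (0:ℝ) * h2' + (0:ℝ) * h3'

private lemma hDne : (((3/2) + (1/2)*Real.sqrt 2 + (-1/2)*Real.sqrt 3 + (-1/2)*Real.sqrt 6) * ((1) + (0)*Real.sqrt 2 + (0)*Real.sqrt 3 + (0)*Real.sqrt 6) * ((1) + (1/2)*Real.sqrt 2 + (0)*Real.sqrt 3 + (0)*Real.sqrt 6) * ((5/2) + (3/2)*Real.sqrt 2 + (-1/2)*Real.sqrt 3 + (-1/2)*Real.sqrt 6) * ((2) + (1)*Real.sqrt 2 + (0)*Real.sqrt 3 + (0)*Real.sqrt 6) * ((3) + (2)*Real.sqrt 2 + (0)*Real.sqrt 3 + (0)*Real.sqrt 6) : ℝ) ≠ 0 := by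
  have b := And.intro l2 (And.intro u2 (And.intro l3 (And.intro u3 (And.intro l6 u6))))
  have p0 : (0:ℝ) < ((3/2) + (1/2)*Real.sqrt 2 + (-1/2)*Real.sqrt 3 + (-1/2)*Real.sqrt 6) := by nlinarith [l2,u2,l3,u3,l6,u6]
  have p1 : (0:ℝ) < ((1) + (0)*Real.sqrt 2 + (0)*Real.sqrt 3 + (0)*Real.sqrt 6) := by nlinarith [l2,u2,l3,u3,l6,u6]
  have p2 : (0:ℝ) < ((1) + (1/2)*Real.sqrt 2 + (0)*Real.sqrt 3 + (0)*Real.sqrt 6) := by nlinarith [l2,u2,l3,u3,l6,u6]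
  have p3 : (0:ℝ) < ((5/2) + (3/2)*Real.sqrt 2 + (-1/2)*Real.sqrt 3 + (-1/2)*Real.sqrt 6) := by nlinarith [l2,u2,l3,u3,l6,u6]
  have p4 : (0:ℝ) < ((2) + (1)*Real.sqrt 2 + (0)*Real.sqrt 3 + (0)*Real.sqrt 6) := by nlinarith [l2,u2,l3,u3,l6,u6]
  have p5 : (0:ℝ) < ((3) + (2)*Real.sqrt 2 + (0)*Real.sqrt 3 + (0)*Real.sqrt 6) := by nlinarith [l2,u2,l3,u3,l6,u6]
  positivity

private lemma w00 : qdimG2 0 0 ^ 2 = ((1) + (0)*Real.sqrt 2 + (0)*Real.sqrt 3 + (0)*Real.sqrt 6) := by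
  rw [qdimG2]
  push_cast
  norm_num [div_pow, mul_pow]
  rw [Q1, Q3, Q4, Q5, Q6, Q9]
  rw [div_eq_iff hDne, h6']
  linear_combination (0:ℝ) * h2' + (0:ℝ) * h3'

private lemma w01 : qdimG2 0 1 ^ 2 = ((10) + (0)*Real.sqrt 2 + (0)*Real.sqrt 3 + (4)*Real.sqrt 6) := by
  rw [qdimG2]
  push_cast
  norm_num [div_pow, mul_pow]
  rw [Q1, Q2, Q3, Q4, Q5, Q6, Q7, Q9, Q12]
  rw [div_eq_iff hDne, h6']
  linear_combination ((-1809/4) + (369/4) * Real.sqrt 3 + (747/4) * Real.sqrt 3 ^ 2 + (-187/4) * Real.sqrt 3 ^ 3 + (-192) * Real.sqrt 2 + (-25/2) * Real.sqrt 2 * Real.sqrt 3 + (148) * Real.sqrt 2 * Real.sqrt 3 ^ 2 + (-69/2) * Real.sqrt 2 * Real.sqrt 3 ^ 3 + (-183/4) * Real.sqrt 2 ^ 2 + (-173/4) * Real.sqrt 2 ^ 2 * Real.sqrt 3 + (353/4) * Real.sqrt 2 ^ 2 * Real.sqrt 3 ^ 2 + (-81/4) * Real.sqrt 2 ^ 2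 * Real.sqrt 3 ^ 3 + (-9/2) * Real.sqrt 2 ^ 3 + (-20) * Real.sqrt 2 ^ 3 * Real.sqrt 3 + (59/2) * Real.sqrt 2 ^ 3 * Real.sqrt 3 ^ 2 + (-7) * Real.sqrt 2 ^ 3 * Real.sqrt 3 ^ 3 + (-3) * Real.sqrt 2 ^ 4 * Real.sqrt 3 + (4) * Real.sqrt 2 ^ 4 * Real.sqrt 3 ^ 2 + (-1) * Real.sqrt 2 ^ 4 * Real.sqrt 3 ^ 3 : ℝ) * h2' + ((693/2) + (-181/2) * Real.sqrt 3 + (245) * Real.sqrt 2 + (-64) * Real.sqrt 2 * Real.sqrt 3 : ℝ) * h3'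

private lemma w02 : qdimG2 0 2 ^ 2 = ((40) + (0)*Real.sqrt 2 + (0)*Real.sqrt 3 + (16)*Real.sqrt 6) := by
  rw [qdimG2]
  push_cast
  norm_num [div_pow, mul_pow]
  rw [Q1, Q3, Q4, Q5, Q6, Q9, Q12, Q15]
  rw [div_eq_iff hDne, h6']
  linear_combination ((-2853) + (600) * Real.sqrt 3 + (1119) * Real.sqrt 3 ^ 2 + (-280) * Real.sqrt 3 ^ 3 + (-1224) * Real.sqrt 2 + (14) * Real.sqrt 2 * Real.sqrt 3 + (784) * Real.sqrt 2 * Real.sqrt 3 ^ 2 + (-186) * Real.sqrt 2 * Real.sqrt 3 ^ 3 + (-297) * Real.sqrt 2 ^ 2 + (-172) * Real.sqrt 2 ^ 2 * Real.sqrt 3 + (413) * Real.sqrt 2 ^ 2 * Real.sqrt 3 ^ 2 + (-96) * Real.sqrt 2 ^ 2 * Real.sqrt 3 ^ 3 + (-30) * Real.sqrt 2 ^ 3 + (-82) * Real.sqrt 2 ^ 3 * Real.sqrt 3 + (126) * Real.sqrt 2 ^ 3 * Real.sqrt 3 ^ 2 + (-30) * Real.sqrt 2 ^ 3 * Real.sqrt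 3 ^ 3 + (-12) * Real.sqrt 2 ^ 4 * Real.sqrt 3 + (16) * Real.sqrt 2 ^ 4 * Real.sqrt 3 ^ 2 + (-4) * Real.sqrt 2 ^ 4 * Real.sqrt 3 ^ 3 : ℝ) * h2' + ((2178) + (-560) * Real.sqrt 3 + (1540) * Real.sqrt 2 + (-396) * Real.sqrt 2 * Real.sqrt 3 : ℝ) * h3'

private lemma w03 : qdimG2 0 3 ^ 2 = ((49) + (0)*Real.sqrt 2 + (0)*Real.sqrt 3 + (20)*Real.sqrt 6) := by
  rw [qdimG2]
  push_cast
  norm_num [div_pow, mul_pow]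
  rw [Q1, Q3, Q4, Q5, Q6, Q7, Q9, Q11, Q15, Q18]
  rw [div_eq_iff hDne, h6']
  linear_combination ((-3618) + (750) * Real.sqrt 3 + (1422) * Real.sqrt 3 ^ 2 + (-350) * Real.sqrt 3 ^ 3 + (-1536) * Real.sqrt 2 + (35/2) * Real.sqrt 2 * Real.sqrt 3 + (992) * Real.sqrt 2 * Real.sqrt 3 ^ 2 + (-465/2) * Real.sqrt 2 * Real.sqrt 3 ^ 3 + (-366) * Real.sqrt 2 ^ 2 + (-215) * Real.sqrt 2 ^ 2 * Real.sqrt 3 + (520) * Real.sqrt 2 ^ 2 * Real.sqrt 3 ^ 2 + (-120) * Real.sqrt 2 ^ 2 * Real.sqrt 3 ^ 3 + (-36) * Real.sqrt 2 ^ 3 + (-205/2) * Real.sqrt 2 ^ 3 * Real.sqrt 3 + (158) * Real.sqrt 2 ^ 3 * Real.sqrt 3 ^ 2 + (-75/2) * Real.sqrt 2 ^ 3 * Real.sqrt 3 ^ 3 + (-15) * Real.sqrt 2 ^ 4 * Real.sqrt 3 + (20) * Real.sqrt 2 ^ 4 * Real.sqrt 3 ^ 2 + (-5) * Real.sqrt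 2 ^ 4 * Real.sqrt 3 ^ 3 : ℝ) * h2' + ((2772) + (-700) * Real.sqrt 3 + (1960) * Real.sqrt 2 + (-495) * Real.sqrt 2 * Real.sqrt 3 : ℝ) * h3'

private lemma w04 : qdimG2 0 4 ^ 2 = ((15) + (0)*Real.sqrt 2 + (0)*Real.sqrt 3 + (6)*Real.sqrt 6) := by
  rw [qdimG2]
  push_cast
  norm_num [div_pow, mul_pow]
  rw [Q1, Q3, Q4, Q5, Q6, Q8, Q9, Q13, Q18, Q21]
  rw [div_eq_iff hDne, h6']
  linear_combination ((-1056) + (225) * Real.sqrt 3 + (414) * Real.sqrt 3 ^ 2 + (-105) * Real.sqrt 3 ^ 3 + (-1821/4) * Real.sqrt 2 + (21/4) * Real.sqrt 2 * Real.sqrt 3 + (1167/4) * Real.sqrt 2 * Real.sqrt 3 ^ 2 + (-279/4) * Real.sqrt 2 * Real.sqrt 3 ^ 3 + (-111) * Real.sqrt 2 ^ 2 + (-129/2) * Real.sqrt 2 ^ 2 * Real.sqrt 3 + (309/2) * Real.sqrt 2 ^ 2 * Real.sqrt 3 ^ 2 + (-36) * Real.sqrt 2 ^ 2 * Real.sqrt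 3 ^ 3 + (-45/4) * Real.sqrt 2 ^ 3 + (-123/4) * Real.sqrt 2 ^ 3 * Real.sqrt 3 + (189/4) * Real.sqrt 2 ^ 3 * Real.sqrt 3 ^ 2 + (-45/4) * Real.sqrt 2 ^ 3 * Real.sqrt 3 ^ 3 + (-9/2) * Real.sqrt 2 ^ 4 * Real.sqrt 3 + (6) * Real.sqrt 2 ^ 4 * Real.sqrt 3 ^ 2 + (-3/2) * Real.sqrt 2 ^ 4 * Real.sqrt 3 ^ 3 : ℝ) * h2' + ((804) + (-210) * Real.sqrt 3 + (1137/2) * Real.sqrt 2 + (-297/2) * Real.sqrt 2 * Real.sqrt 3 : ℝ) * h3'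

private lemma w10 : qdimG2 1 0 ^ 2 = ((15) + (0)*Real.sqrt 2 + (0)*Real.sqrt 3 + (6)*Real.sqrt 6) := by
  rw [qdimG2]
  push_cast
  norm_num [div_pow, mul_pow]
  rw [Q1, Q3, Q4, Q5, Q6, Q7, Q8, Q9, Q15]
  rw [div_eq_iff hDne, h6']
  linear_combination ((-468) + (225) * Real.sqrt 3 + (210) * Real.sqrt 3 ^ 2 + (-105) * Real.sqrt 3 ^ 3 + (-603/4) * Real.sqrt 2 + (21/4) * Real.sqrt 2 * Real.sqrt 3 + (681/4) * Real.sqrt 2 * Real.sqrt 3 ^ 2 + (-279/4) * Real.sqrt 2 * Real.sqrt 3 ^ 3 + (-15/2) * Real.sqrt 2 ^ 2 + (-129/2) * Real.sqrt 2 ^ 2 * Real.sqrt 3 + (102) * Real.sqrt 2 ^ 2 * Real.sqrt 3 ^ 2 + (-36) * Real.sqrt 2 ^ 2 * Real.sqrt 3 ^ 3 + (33/4) * Real.sqrt 2 ^ 3 + (-123/4) * Real.sqrt 2 ^ 3 * Real.sqrt 3 + (135/4) * Real.sqrt 2 ^ 3 * Real.sqrt 3 ^ 2 + (-45/4) * Real.sqrt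 2 ^ 3 * Real.sqrt 3 ^ 3 + (3/2) * Real.sqrt 2 ^ 4 + (-9/2) * Real.sqrt 2 ^ 4 * Real.sqrt 3 + (9/2) * Real.sqrt 2 ^ 4 * Real.sqrt 3 ^ 2 + (-3/2) * Real.sqrt 2 ^ 4 * Real.sqrt 3 ^ 3 : ℝ) * h2' + ((384) + (-210) * Real.sqrt 3 + (543/2) * Real.sqrt 2 + (-297/2) * Real.sqrt 2 * Real.sqrt 3 : ℝ) * h3'

private lemma w11 : qdimG2 1 1 ^ 2 = ((60) + (0)*Real.sqrt 2 + (0)*Real.sqrt 3 + (24)*Real.sqrt 6) := by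
  rw [qdimG2]
  push_cast
  norm_num [div_pow, mul_pow]
  rw [Q1, Q2, Q3, Q4, Q5, Q6, Q8, Q9, Q10, Q12, Q18]
  rw [div_eq_iff hDne, h6']
  linear_combination ((-6861/2) + (900) * Real.sqrt 3 + (2811/2) * Real.sqrt 3 ^ 2 + (-420) * Real.sqrt 3 ^ 3 + (-1368) * Real.sqrt 2 + (21) * Real.sqrt 2 * Real.sqrt 3 + (1038) * Real.sqrt 2 * Real.sqrt 3 ^ 2 + (-279) * Real.sqrt 2 * Real.sqrt 3 ^ 3 + (-543/2) * Real.sqrt 2 ^ 2 + (-258) * Real.sqrt 2 ^ 2 * Real.sqrt 3 + (573) * Real.sqrt 2 ^ 2 * Real.sqrt 3 ^ 2 + (-144) * Real.sqrt 2 ^ 2 * Real.sqrt 3 ^ 3 + (-9) * Real.sqrt 2 ^ 3 + (-123) * Real.sqrt 2 ^ 3 * Real.sqrt 3 + (180) * Real.sqrt 2 ^ 3 * Real.sqrt 3 ^ 2 + (-45) * Real.sqrt 2 ^ 3 * Real.sqrt 3 ^ 3 + (3) * Real.sqrt 2 ^ 4 + (-18) * Real.sqrt 2 ^ 4 * Real.sqrt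 3 + (93/4) * Real.sqrt 2 ^ 4 * Real.sqrt 3 ^ 2 + (-6) * Real.sqrt 2 ^ 4 * Real.sqrt 3 ^ 3 : ℝ) * h2' + ((2673) + (-840) * Real.sqrt 3 + (1890) * Real.sqrt 2 + (-594) * Real.sqrt 2 * Real.sqrt 3 : ℝ) * h3'

private lemma w12 : qdimG2 1 2 ^ 2 = ((40) + (0)*Real.sqrt 2 + (0)*Real.sqrt 3 + (16)*Real.sqrt 6) := by
  rw [qdimG2]
  push_cast
  norm_num [div_pow, mul_pow]
  rw [Q1, Q3, Q4, Q5, Q6, Q9, Q12, Q15, Q21]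
  rw [div_eq_iff hDne, h6']
  linear_combination ((-2853) + (600) * Real.sqrt 3 + (1119) * Real.sqrt 3 ^ 2 + (-280) * Real.sqrt 3 ^ 3 + (-1224) * Real.sqrt 2 + (14) * Real.sqrt 2 * Real.sqrt 3 + (784) * Real.sqrt 2 * Real.sqrt 3 ^ 2 + (-186) * Real.sqrt 2 * Real.sqrt 3 ^ 3 + (-297) * Real.sqrt 2 ^ 2 + (-172) * Real.sqrt 2 ^ 2 * Real.sqrt 3 + (413) * Real.sqrt 2 ^ 2 * Real.sqrt 3 ^ 2 + (-96) * Real.sqrt 2 ^ 2 * Real.sqrt 3 ^ 3 + (-30) * Real.sqrt 2 ^ 3 + (-82) * Real.sqrt 2 ^ 3 * Real.sqrt 3 + (126) * Real.sqrt 2 ^ 3 * Real.sqrt 3 ^ 2 + (-30) * Real.sqrt 2 ^ 3 * Real.sqrt 3 ^ 3 + (-12) * Real.sqrt 2 ^ 4 * Real.sqrt 3 + (16) * Real.sqrt 2 ^ 4 * Real.sqrt 3 ^ 2 + (-4) * Real.sqrt 2 ^ 4 * Real.sqrt 3 ^ 3 : ℝ) * h2' + ((2178) + (-560) * Real.sqrt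 3 + (1540) * Real.sqrt 2 + (-396) * Real.sqrt 2 * Real.sqrt 3 : ℝ) * h3'

private lemma w20 : qdimG2 2 0 ^ 2 = ((10) + (0)*Real.sqrt 2 + (0)*Real.sqrt 3 + (4)*Real.sqrt 6) := by
  rw [qdimG2]
  push_cast
  norm_num [div_pow, mul_pow]
  rw [Q1, Q3, Q4, Q5, Q6, Q9, Q10, Q11, Q12, Q21]
  rw [div_eq_iff hDne, h6']
  linear_combination ((-1809/4) + (831/4) * Real.sqrt 3 + (747/4) * Real.sqrt 3 ^ 2 + (-373/4) * Real.sqrt 3 ^ 3 + (-192) * Real.sqrt 2 + (39/2) * Real.sqrt 2 * Real.sqrt 3 + (148) * Real.sqrt 2 * Real.sqrt 3 ^ 2 + (-117/2) * Real.sqrt 2 * Real.sqrt 3 ^ 3 + (-183/4) * Real.sqrt 2 ^ 2 + (-171/4) * Real.sqrt 2 ^ 2 * Real.sqrt 3 + (353/4) * Real.sqrt 2 ^ 2 * Real.sqrt 3 ^ 2 + (-111/4) * Real.sqrt 2 ^ 2 * Real.sqrt 3 ^ 3 + (-9/2) * Real.sqrt 2 ^ 3 + (-21) * Real.sqrt 2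 ^ 3 * Real.sqrt 3 + (59/2) * Real.sqrt 2 ^ 3 * Real.sqrt 3 ^ 2 + (-8) * Real.sqrt 2 ^ 3 * Real.sqrt 3 ^ 3 + (-3) * Real.sqrt 2 ^ 4 * Real.sqrt 3 + (4) * Real.sqrt 2 ^ 4 * Real.sqrt 3 ^ 2 + (-1) * Real.sqrt 2 ^ 4 * Real.sqrt 3 ^ 3 : ℝ) * h2' + ((693/2) + (-379/2) * Real.sqrt 3 + (245) * Real.sqrt 2 + (-134) * Real.sqrt 2 * Real.sqrt 3 : ℝ) * h3'

/-- The global dimension of the fusion category `A₄(G₂)`: the sum of the squares of the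
quantum dimensions of the nine simple objects (weights with 2λ1+λ2 ≤ 4) is
`48(5+2√6)`. -/
theorem global_dimension_A4_G2 :
    ∑ p ∈ (Finset.range 5 ×ˢ Finset.range 5).filter (fun p => 2 * p.1 + p.2 ≤ 4),
      (qdimG2 p.1 p.2)^2 = 48 * (5 + 2 * Real.sqrt 6) := by
  norm_num [Finset.sum_filter, Finset.sum_product, Finset.sum_range_succ,
    w00, w01, w02, w03, w04, w10, w11, w12, w20]
  ring
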